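/- arXiv:1911.03041 — 6 statements merged into one kernel-verified Lean document; each statement's English description precedes it below -/
import Mathlib

section
/- Let E₁, E₂ ⊂ ℝⁿ be linear subspaces with E₁ + E₂ = ℝⁿ, let θ be the angle between E₁ and E₂, and set I = E₁ ∩ E₂, L₁ = I⊥ ∩ E₁, L₂ = I⊥ ∩ E₂. If x = l₁ + v + l₂ with l₁ ∈ L₁, v ∈ I, l₂ ∈ L₂, then |l₁| ≤ dist(x, E₂)/sin θ and |l₂| ≤ dist(x, E₁)/sin θ. -/
/-!
Write `x - e` for `e ∈ E₂` as `l₁ - u - w` with `u ∈ L₂` and `w ∈ I`. As `l₁ - u ⊥ I`,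
`‖x - e‖ ≥ ‖l₁ - u‖ ≥ ‖l₁‖ sin ∠(l₁, u) ≥ ‖l₁‖ sin θ`, the last step because both `∠(l₁, u)` and
`π - ∠(l₁, u) = ∠(l₁, -u)` are at least `θ`. Finally `sin θ > 0`: by compactness of the unit
spheres of `L₁` and `L₂` the infimum `θ` is attained, by vectors that are not collinear since
`L₁ ∩ L₂ = 0`.
-/

open InnerProductGeometry Metric Real

theorem Real.sin_le_sin_of_le_of_le_pi_sub {θ a : ℝ} (hθ : 0 ≤ θ) (hθa : θ ≤ a)
    (hθa' : θ ≤ π - a) : sin θ ≤ sin a := by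
  rcases le_total a (π / 2) with ha | ha
  · exact sin_le_sin_of_le_of_le_pi_div_two (by linarith [pi_pos]) ha hθa
  · rw [← sin_pi_sub a]
    exact sin_le_sin_of_le_of_le_pi_div_two (by linarith [pi_pos]) (by linarith) hθa'

namespace InnerProductGeometry

variable {V : Type*} [NormedAddCommGroup V] [InnerProductSpace ℝ V]

theorem norm_mul_sin_angle_le_norm_sub (x y : V) : ‖x‖ * sin (angle x y) ≤ ‖x - y‖ := by
  have hsq : (‖x‖ * sin (angle x y)) ^ 2 ≤ ‖x - y‖ ^ 2 := by
    rw [sq ‖x - y‖, norm_sub_sq_eq_norm_sq_add_norm_sq_sub_two_mul_norm_mul_norm_mul_cos_angle]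
    nlinarith [sin_sq_add_cos_sq (angle x y), sq_nonneg (‖x‖ * cos (angle x y) - ‖y‖)]
  exact le_of_sq_le_sq hsq (norm_nonneg _)

def angleSet (L₁ L₂ : Submodule ℝ V) : Set ℝ :=
  {a : ℝ | ∃ u₁ ∈ L₁, u₁ ≠ 0 ∧ ∃ u₂ ∈ L₂, u₂ ≠ 0 ∧ a = angle u₁ u₂}

variable {L₁ L₂ : Submodule ℝ V}

theorem angleSet_comm (L₁ L₂ : Submodule ℝ V) : angleSet L₁ L₂ = angleSet L₂ L₁ := by
  ext a
  constructor <;>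
  · rintro ⟨u₁, h₁, h₁0, u₂, h₂, h₂0, rfl⟩
    exact ⟨u₂, h₂, h₂0, u₁, h₁, h₁0, angle_comm _ _⟩

theorem angleSet_eq_image_sphere (L₁ L₂ : Submodule ℝ V) :
    angleSet L₁ L₂ = (fun p : V × V => angle p.1 p.2) ''
      ((sphere 0 1 ∩ L₁) ×ˢ (sphere 0 1 ∩ L₂)) := by
  have normalize : ∀ {L : Submodule ℝ V} {u : V}, u ∈ L → u ≠ 0 →
      ‖u‖⁻¹ • u ∈ sphere (0 : V) 1 ∩ L := fun hu hu0 =>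
    ⟨by simp [norm_smul, norm_ne_zero_iff.2 hu0], Submodule.smul_mem _ _ hu⟩
  ext a
  constructor
  · rintro ⟨u₁, h₁, h₁0, u₂, h₂, h₂0, rfl⟩
    refine ⟨(‖u₁‖⁻¹ • u₁, ‖u₂‖⁻¹ • u₂), ⟨normalize h₁ h₁0, normalize h₂ h₂0⟩, ?_⟩
    simp only [angle_smul_left_of_pos _ _ (inv_pos.2 (norm_pos_iff.2 h₁0)),
      angle_smul_right_of_pos _ _ (inv_pos.2 (norm_pos_iff.2 h₂0))]
  · rintro ⟨⟨u₁, u₂⟩, ⟨⟨h₁s, h₁⟩, ⟨h₂s, h₂⟩⟩, rfl⟩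
    exact ⟨u₁, h₁, ne_zero_of_mem_unit_sphere ⟨u₁, h₁s⟩,
      u₂, h₂, ne_zero_of_mem_unit_sphere ⟨u₂, h₂s⟩, rfl⟩

theorem isCompact_angleSet [FiniteDimensional ℝ V] (L₁ L₂ : Submodule ℝ V) :
    IsCompact (angleSet L₁ L₂) := by
  rw [angleSet_eq_image_sphere]
  refine IsCompact.image_of_continuousOn ?_ fun p hp => ?_
  · exact ((isCompact_sphere 0 1).inter_right L₁.closed_of_finiteDimensional).prod
      ((isCompact_sphere 0 1).inter_right L₂.closed_of_finiteDimensional)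
  · exact (continuousAt_angle (ne_zero_of_mem_unit_sphere ⟨_, hp.1.1⟩)
      (ne_zero_of_mem_unit_sphere ⟨_, hp.2.1⟩)).continuousWithinAt

theorem mem_angleSet_of_isGLB [FiniteDimensional ℝ V] {θ : ℝ}
    (hθ : IsGLB (angleSet L₁ L₂) θ) : θ ∈ angleSet L₁ L₂ := by
  have hne : (angleSet L₁ L₂).Nonempty :=
    Set.nonempty_iff_ne_empty.2 fun h => not_isTop θ (isGLB_empty_iff.1 (h ▸ hθ))
  exact hθ.mem_of_isClosed hne (isCompact_angleSet L₁ L₂).isClosed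

theorem sin_pos_of_mem_angleSet (hL : Disjoint L₁ L₂) {θ : ℝ} (hθ : θ ∈ angleSet L₁ L₂) :
    0 < sin θ := by
  obtain ⟨u₁, h₁, -, u₂, h₂, h₂0, rfl⟩ := hθ
  refine (sin_angle_nonneg u₁ u₂).lt_of_ne' fun h => h₂0 ?_
  have hcol : ∃ r : ℝ, u₂ = r • u₁ := by
    rcases sin_eq_zero_iff_angle_eq_zero_or_angle_eq_pi.1 h with h | h
    · obtain ⟨-, r, -, hr⟩ := angle_eq_zero_iff.1 h; exact ⟨r, hr⟩
    · obtain ⟨-, r, -, hr⟩ := angle_eq_pi_iff.1 h; exact ⟨r, hr⟩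
  obtain ⟨r, rfl⟩ := hcol
  exact Submodule.disjoint_def.1 hL _ (L₁.smul_mem r h₁) h₂

theorem sin_le_sin_angle_of_isGLB {θ : ℝ} (hθ : IsGLB (angleSet L₁ L₂) θ) {l u : V}
    (hl : l ∈ L₁) (hu : u ∈ L₂) : sin θ ≤ sin (angle l u) := by
  rcases eq_or_ne l 0 with rfl | hl0
  · simpa using sin_le_one θ
  rcases eq_or_ne u 0 with rfl | hu0
  · simpa using sin_le_one θ
  have hθ0 : 0 ≤ θ := hθ.2 fun _ ⟨u₁, _, _, u₂, _, _, ha⟩ => ha ▸ angle_nonneg u₁ u₂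
  have hθu : θ ≤ angle l u := hθ.1 ⟨l, hl, hl0, u, hu, hu0, rfl⟩
  have hθnu : θ ≤ π - angle l u := by
    rw [← angle_neg_right]
    exact hθ.1 ⟨l, hl, hl0, -u, L₂.neg_mem hu, neg_ne_zero.2 hu0, rfl⟩
  exact sin_le_sin_of_le_of_le_pi_sub hθ0 hθu hθnu

theorem norm_mul_le_infDist_add {I E : Submodule ℝ V} [I.HasOrthogonalProjection] (hIE : I ≤ E)
    {l y : V} (hl : l ∈ Iᗮ) (hy : y ∈ E) {s : ℝ} (hs : ∀ u ∈ Iᗮ ⊓ E, s ≤ sin (angle l u)) :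
    ‖l‖ * s ≤ infDist (l + y) E := by
  refine (le_infDist ⟨0, E.zero_mem⟩).2 fun e he => ?_
  have he' : e - y ∈ I ⊔ (Iᗮ ⊓ E) := by
    rw [Submodule.sup_orthogonal_inf_of_hasOrthogonalProjection hIE]
    exact E.sub_mem he hy
  obtain ⟨w, hw, u, hu, hwu⟩ := Submodule.mem_sup.1 he'
  have hpyth := norm_sub_sq_eq_norm_sq_add_norm_sq_real
    (Submodule.inner_left_of_mem_orthogonal hw (Iᗮ.sub_mem hl hu.1))
  calc ‖l‖ * s ≤ ‖l‖ * sin (angle l u) := by gcongr; exact hs u hu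
    _ ≤ ‖l - u‖ := norm_mul_sin_angle_le_norm_sub l u
    _ ≤ ‖l - u - w‖ :=
      (mul_self_le_mul_self_iff (norm_nonneg _) (norm_nonneg _)).2
        (hpyth ▸ le_add_of_nonneg_right (mul_self_nonneg _))
    _ = dist (l + y) e := by
      rw [dist_eq_norm, ← sub_eq_iff_eq_add.2 hwu.symm]; abel_nf

end InnerProductGeometry

theorem stmt_1_general {n : ℕ}
    (E₁ E₂ : Submodule ℝ (EuclideanSpace ℝ (Fin n)))
    (I : Submodule ℝ (EuclideanSpace ℝ (Fin n))) (hI : I = E₁ ⊓ E₂)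
    (L₁ L₂ : Submodule ℝ (EuclideanSpace ℝ (Fin n)))
    (hL₁ : L₁ = Iᗮ ⊓ E₁) (hL₂ : L₂ = Iᗮ ⊓ E₂)
    (θ : ℝ)
    (hθ : IsGLB {a : ℝ | ∃ u₁ ∈ L₁, u₁ ≠ 0 ∧ ∃ u₂ ∈ L₂, u₂ ≠ 0 ∧
            a = InnerProductGeometry.angle u₁ u₂} θ)
    (x l₁ v l₂ : EuclideanSpace ℝ (Fin n))
    (hl₁ : l₁ ∈ L₁) (hv : v ∈ I) (hl₂ : l₂ ∈ L₂)
    (hx : x = l₁ + v + l₂) :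
    ‖l₁‖ ≤ Metric.infDist x (E₂ : Set (EuclideanSpace ℝ (Fin n))) / Real.sin θ ∧
    ‖l₂‖ ≤ Metric.infDist x (E₁ : Set (EuclideanSpace ℝ (Fin n))) / Real.sin θ := by
  change IsGLB (angleSet L₁ L₂) θ at hθ
  subst hI hL₁ hL₂ hx
  have hdisj : Disjoint ((E₁ ⊓ E₂)ᗮ ⊓ E₁) ((E₁ ⊓ E₂)ᗮ ⊓ E₂) := by
    rw [disjoint_iff, inf_inf_inf_comm, inf_idem, inf_comm, Submodule.inf_orthogonal_eq_bot]
  have hsin := sin_pos_of_mem_angleSet hdisj (mem_angleSet_of_isGLB hθ)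
  rw [le_div_iff₀ hsin, le_div_iff₀ hsin]
  constructor
  · rw [add_assoc]
    exact norm_mul_le_infDist_add inf_le_right hl₁.1 (E₂.add_mem hv.2 hl₂.2)
      fun u hu => sin_le_sin_angle_of_isGLB hθ hl₁ hu
  · rw [add_comm]
    exact norm_mul_le_infDist_add inf_le_left hl₂.1 (E₁.add_mem hl₁.2 hv.1)
      fun u hu => sin_le_sin_angle_of_isGLB (by rwa [angleSet_comm] at hθ) hl₂ hu

/-- If `E₁ + E₂ = ℝⁿ`, `θ` is the angle between `E₁` and `E₂`
(the infimum of angles between nonzero vectors of `L₁ = I^⊥ ⊓ E₁` and `L₂ = I^⊥ ⊓ E₂`,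
where `I = E₁ ⊓ E₂`), and `x = l₁ + v + l₂` with `l₁ ∈ L₁`, `v ∈ I`, `l₂ ∈ L₂`, then
`‖l₁‖ ≤ dist(x, E₂) / sin θ` and `‖l₂‖ ≤ dist(x, E₁) / sin θ`. -/
theorem stmt_1 {n : ℕ}
    (E₁ E₂ : Submodule ℝ (EuclideanSpace ℝ (Fin n)))
    (hsum : E₁ ⊔ E₂ = ⊤)
    (I : Submodule ℝ (EuclideanSpace ℝ (Fin n))) (hI : I = E₁ ⊓ E₂)
    (L₁ L₂ : Submodule ℝ (EuclideanSpace ℝ (Fin n)))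
    (hL₁ : L₁ = Iᗮ ⊓ E₁) (hL₂ : L₂ = Iᗮ ⊓ E₂)
    (θ : ℝ)
    (hθ : IsGLB {a : ℝ | ∃ u₁ ∈ L₁, u₁ ≠ 0 ∧ ∃ u₂ ∈ L₂, u₂ ≠ 0 ∧
            a = InnerProductGeometry.angle u₁ u₂} θ)
    (x l₁ v l₂ : EuclideanSpace ℝ (Fin n))
    (hl₁ : l₁ ∈ L₁) (hv : v ∈ I) (hl₂ : l₂ ∈ L₂)
    (hx : x = l₁ + v + l₂) :
    ‖l₁‖ ≤ Metric.infDist x (E₂ : Set (EuclideanSpace ℝ (Fin n))) / Real.sin θ ∧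
    ‖l₂‖ ≤ Metric.infDist x (E₁ : Set (EuclideanSpace ℝ (Fin n))) / Real.sin θ :=
  stmt_1_general E₁ E₂ I hI L₁ L₂ hL₁ hL₂ θ hθ x l₁ v l₂ hl₁ hv hl₂ hx
end

section
/- Perturbation stability of disjointness: let T be a finite family, φ a map on a neighborhood of ⋃_{Q∈T} Q into ℝˡ, and L, τ, ρ > 0. Suppose for each Q ∈ T there exists c_Q ∈ ℝˡ with B_{L⁻¹ρ}(c_Q) ⊂ φ(Q) ⊂ B_{Lρ}(c_Q), and φ(Q₁) ∩ φ(Q₂) = ∅ for distinct Q₁, Q₂ ∈ T. Then for any ψ defined on a neighborhood of ⋃_{Q∈T} Q with sup-distance ‖φ − ψ‖ < τρ, there exists T' ⊂ T with #T' ≥ [3L(L+τ)]^{-l} · #T and ψ(Q₁) ∩ ψ(Q₂) = ∅ for all distinct Q₁, Q₂ ∈ T'. -/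
/-!
Let `r = L⁻¹ρ` and `R = (L + τ)ρ`, so that `φ(Q)` and `ψ(Q)` lie in `B_R(c_Q)` while `φ(Q)`
contains `B_r(c_Q)`. Take a maximal subfamily `T'` with pairwise disjoint `ψ`-images (Vitali);
every `ψ(Q)`, `Q ∈ T`, meets some `ψ(Q')`, `Q' ∈ T'`. If `ψ(Q)` meets `ψ(Q')` then
`|c_Q − c_Q'| < 2R`, so the disjoint balls `B_r(c_Q)` of all such `Q` lie in `B_{3R}(c_Q')`, and
comparing volumes there are at most `(3R/r)^l = (3L(L+τ))^l` of them.
-/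

open MeasureTheory Metric Module Finset

section VolumeCount

variable {E : Type*} [NormedAddCommGroup E] [NormedSpace ℝ E] [MeasurableSpace E] [BorelSpace E]
  [FiniteDimensional ℝ E]

theorem card_le_div_pow_of_pairwiseDisjoint_ball_subset {ι : Type*} {s : Finset ι} {c : ι → E}
    {x : E} {r R : ℝ} (hr : 0 < r) (hR : 0 < R)
    (hd : (s : Set ι).PairwiseDisjoint fun i => ball (c i) r)
    (hsub : ∀ i ∈ s, ball (c i) r ⊆ ball x R) :
    (#s : ℝ) ≤ (R / r) ^ finrank ℝ E := by
  set μ : Measure E := Measure.addHaar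
  have hvol : #s * (ENNReal.ofReal (r ^ finrank ℝ E) * μ (ball 0 1))
      ≤ ENNReal.ofReal (R ^ finrank ℝ E) * μ (ball 0 1) :=
    calc #s * (ENNReal.ofReal (r ^ finrank ℝ E) * μ (ball 0 1))
        = ∑ i ∈ s, μ (ball (c i) r) := by
          simp only [μ.addHaar_ball_of_pos _ hr, sum_const, nsmul_eq_mul]
      _ = μ (⋃ i ∈ s, ball (c i) r) :=
          (measure_biUnion_finset hd fun _ _ => measurableSet_ball).symm
      _ ≤ μ (ball x R) := measure_mono (Set.iUnion₂_subset hsub)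
      _ = ENNReal.ofReal (R ^ finrank ℝ E) * μ (ball 0 1) := μ.addHaar_ball_of_pos _ hR
  rw [← mul_assoc, ENNReal.mul_le_mul_iff_left (measure_ball_pos μ _ one_pos).ne'
    measure_ball_lt_top.ne, ← ENNReal.ofReal_natCast, ← ENNReal.ofReal_mul (by positivity),
    ENNReal.ofReal_le_ofReal_iff (by positivity)] at hvol
  rwa [div_pow, le_div_iff₀ (by positivity)]

open scoped Classical in
theorem card_filter_inter_nonempty_le {ι : Type*} {T : Finset ι} {A B : ι → Set E} {c : ι → E}
    {r R : ℝ} (hr : 0 < r) (hR : 0 < R) (hA_inner : ∀ i ∈ T, ball (c i) r ⊆ A i)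
    (hA_outer : ∀ i ∈ T, A i ⊆ ball (c i) R) (hB : ∀ i ∈ T, B i ⊆ ball (c i) R)
    (hA_disj : (T : Set ι).PairwiseDisjoint A) {j : ι} (hj : j ∈ T) :
    (#(T.filter fun i => (B i ∩ B j).Nonempty) : ℝ) ≤ (3 * R / r) ^ finrank ℝ E := by
  refine card_le_div_pow_of_pairwiseDisjoint_ball_subset (c := c) (x := c j) hr (by positivity)
    ?_ ?_
  · refine (hA_disj.subset (coe_subset.2 (filter_subset _ _))).mono_on fun i hi => hA_inner i ?_
    exact (mem_filter.1 hi).1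
  · intro i hi
    obtain ⟨hiT, y, hyi, hyj⟩ := mem_filter.1 hi
    have hcc : dist (c i) (c j) < 2 * R := by
      have := dist_triangle_left (c i) (c j) y
      have := mem_ball.1 (hB i hiT hyi)
      have := mem_ball.1 (hB j hj hyj)
      linarith
    exact ((hA_inner i hiT).trans (hA_outer i hiT)).trans (ball_subset_ball' (by linarith))

end VolumeCount

theorem card_le_card_mul_of_forall_exists {α β : Type*} {T : Finset α} {S : Finset β}
    (p : α → β → Prop)
    [DecidableRel p] {K : ℝ} (hcover : ∀ a ∈ T, ∃ b ∈ S, p a b)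
    (hK : ∀ b ∈ S, (#(T.filter (p · b)) : ℝ) ≤ K) :
    (#T : ℝ) ≤ #S * K := by
  classical
  have hT : T ⊆ S.biUnion fun b => T.filter (p · b) := fun a ha => by
    obtain ⟨b, hb, hab⟩ := hcover a ha
    exact mem_biUnion.2 ⟨b, hb, mem_filter.2 ⟨ha, hab⟩⟩
  calc (#T : ℝ) ≤ #(S.biUnion fun b => T.filter (p · b)) := by exact_mod_cast card_le_card hT
    _ ≤ ∑ b ∈ S, (#(T.filter (p · b)) : ℝ) := by exact_mod_cast card_biUnion_le
    _ ≤ ∑ _b ∈ S, K := sum_le_sum hK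
    _ = #S * K := by rw [sum_const, nsmul_eq_mul]

theorem Set.image_subset_ball_of_forall_dist_lt {α β : Type*} [PseudoMetricSpace β] {f g : α → β}
    {s : Set α} {c : β} {a b : ℝ} (hf : f '' s ⊆ ball c a) (hfg : ∀ x ∈ s, dist (f x) (g x) < b) :
    g '' s ⊆ ball c (a + b) := by
  rintro _ ⟨x, hx, rfl⟩
  have := dist_triangle_left (g x) c (f x)
  have := mem_ball.1 (hf (mem_image_of_mem f hx))
  have := hfg x hx
  rw [mem_ball]
  linarith

theorem Finset.exists_pairwiseDisjoint_forall_inter_nonempty {α ι : Type*} (T : Finset ι)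
    (B : ι → Set α) (hne : ∀ i ∈ T, (B i).Nonempty) :
    ∃ S ⊆ T, (S : Set ι).PairwiseDisjoint B ∧ ∀ i ∈ T, ∃ j ∈ S, (B i ∩ B j).Nonempty := by
  classical
  -- with `δ ≡ 0` Vitali's lemma just yields a maximal subfamily with pairwise disjoint members
  obtain ⟨u, huT, hu_disj, hu_cover⟩ := Vitali.exists_disjoint_subfamily_covering_enlargement B T
    0 2 one_lt_two (fun _ _ => le_rfl) 0 (fun _ _ => le_rfl) hne
  have hu : ((T.filter (· ∈ u) : Finset ι) : Set ι) = u := by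
    ext i
    simp only [coe_filter, Set.mem_ofPred_eq]
    exact ⟨And.right, fun h => ⟨huT h, h⟩⟩
  refine ⟨T.filter (· ∈ u), filter_subset _ _, by rwa [hu], fun i hi => ?_⟩
  obtain ⟨j, hj, hij, -⟩ := hu_cover i hi
  exact ⟨j, by rw [← mem_coe, hu]; exact hj, hij⟩

/-- Perturbation stability of disjointness: let `T` be a finite family of
subsets of `ℂⁿ`, `φ` a map into `ℝˡ` such that for each `Q ∈ T` there is `c_Q` with
`B(c_Q, L⁻¹ρ) ⊆ φ(Q) ⊆ B(c_Q, Lρ)`, the images `φ(Q)` pairwise disjoint.  Then for any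
`ψ` with `‖φ − ψ‖ < τρ` on `⋃_{Q∈T} Q` there is `T' ⊆ T` with
`#T' ≥ (3L(L+τ))^{-l}·#T` and the `ψ`-images of members of `T'` pairwise disjoint. -/
theorem stmt_8 {nn l : ℕ}
    (T : Finset (Set (EuclideanSpace ℂ (Fin nn))))
    (φ ψ : EuclideanSpace ℂ (Fin nn) → EuclideanSpace ℝ (Fin l))
    (L τ ρ : ℝ) (hL : 0 < L) (hτ : 0 < τ) (hρ : 0 < ρ)
    (hball : ∀ Q ∈ T, ∃ c : EuclideanSpace ℝ (Fin l),
      Metric.ball c (L⁻¹ * ρ) ⊆ φ '' Q ∧ φ '' Q ⊆ Metric.ball c (L * ρ))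
    (hdisj : ∀ Q₁ ∈ T, ∀ Q₂ ∈ T, Q₁ ≠ Q₂ → (φ '' Q₁) ∩ (φ '' Q₂) = ∅)
    (hclose : ∀ Q ∈ T, ∀ x ∈ Q, dist (φ x) (ψ x) < τ * ρ) :
    ∃ T' ⊆ T, (3 * L * (L + τ)) ^ (-(l : ℝ)) * (T.card : ℝ) ≤ (T'.card : ℝ) ∧
      ∀ Q₁ ∈ T', ∀ Q₂ ∈ T', Q₁ ≠ Q₂ → (ψ '' Q₁) ∩ (ψ '' Q₂) = ∅ := by
  classical
  choose! c hc_inner hc_outer using hball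
  have hφ : ∀ Q ∈ T, φ '' Q ⊆ ball (c Q) (L * ρ + τ * ρ) := fun Q hQ =>
    (hc_outer Q hQ).trans (ball_subset_ball (le_add_of_nonneg_right (by positivity)))
  have hψ : ∀ Q ∈ T, ψ '' Q ⊆ ball (c Q) (L * ρ + τ * ρ) := fun Q hQ =>
    Set.image_subset_ball_of_forall_dist_lt (hc_outer Q hQ) (hclose Q hQ)
  have hψ_ne : ∀ Q ∈ T, (ψ '' Q).Nonempty := fun Q hQ =>
    ((nonempty_ball.2 (by positivity)).mono (hc_inner Q hQ)).of_image.image ψ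
  obtain ⟨S, hST, hS_disj, hS_cover⟩ := T.exists_pairwiseDisjoint_forall_inter_nonempty _ hψ_ne
  have hcount : ∀ Q' ∈ S, (#(T.filter fun Q => (ψ '' Q ∩ ψ '' Q').Nonempty) : ℝ) ≤
      (3 * L * (L + τ)) ^ l := by
    intro Q' hQ'
    have hratio : 3 * (L * ρ + τ * ρ) / (L⁻¹ * ρ) = 3 * L * (L + τ) := by field_simp
    simpa [hratio, finrank_euclideanSpace_fin] using card_filter_inter_nonempty_le
      (by positivity) (by positivity) hc_inner hφ hψ
      (fun Q₁ h₁ Q₂ h₂ hne => Set.disjoint_iff_inter_eq_empty.2 (hdisj Q₁ h₁ Q₂ h₂ hne))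
      (hST hQ')
  refine ⟨S, hST, ?_, fun Q₁ h₁ Q₂ h₂ hne => Set.disjoint_iff_inter_eq_empty.1 (hS_disj h₁ h₂ hne)⟩
  rw [Real.rpow_neg (by positivity), Real.rpow_natCast, inv_mul_le_iff₀ (by positivity), mul_comm]
  exact card_le_card_mul_of_forall_exists _ hS_cover hcount
end

section
/- Neighborhood growth bound in J: for any bounded measurable set E ⊂ J = ℝ^{n-1} × 𝕋ⁿ and real numbers 0 < Δρ and δ > 0, the Haar measure of neighborhoods satisfies ν(V_{ρ+Δρ+Δ₁ρ}(E)) ≤ (1 + (1+Δ₁)/Δ)^{2n-1} · ν(V_{Δρ}(E)), where V_δ(E) denotes the δ-neighborhood of E in the invariant metric on J. -/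
/-!
In one real dimension, with `c = r / R` and `p` a nearest-point map onto `A`, the map
`t ↦ c t + (1 - c) p(t)` sends the `R`-neighbourhood of `A` into its `r`-neighbourhood, and since
every nearest-point map on `ℝ` is monotone, it expands distances at least by the factor `c`; hence
it shrinks Lebesgue measure at most by that factor. On a circle the same map, applied to the periodic lift of `A`,
sends one period into an interval of length one period. For the max metric on a product, each
neighbourhood is a product neighbourhood, so by Fubini, shrinking one factor at a time, the growth
exponents add up: `ℝ^{n-1} × 𝕋ⁿ` has exponent `2n - 1`, and `R / r = 1 + (1 + Δ₁) / Δ`.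
-/

open MeasureTheory

instance : Fact (0 < 2 * Real.pi) := ⟨Real.two_pi_pos⟩

/-- The torus `𝕋 = ℝ/2πℤ`. -/
noncomputable abbrev Torus : Type := AddCircle (2 * Real.pi)

open Metric Set
open scoped ENNReal

def HasThickeningGrowth (X : Type*) [PseudoMetricSpace X] [MeasureSpace X] (p : ℕ) : Prop :=
  ∀ (A : Set X) {r R : ℝ}, 0 < r → r ≤ R →
    volume (thickening R A) ≤ ENNReal.ofReal (R / r) ^ p * volume (thickening r A)

theorem monotone_of_abs_sub_le {C : Set ℝ} {p : ℝ → ℝ} (hpC : ∀ t, p t ∈ C)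
    (hp : ∀ t, ∀ c ∈ C, |t - p t| ≤ |t - c|) : Monotone p := by
  intro s t hst
  by_contra! hlt
  have hs := sq_le_sq.2 (hp s (p t) (hpC t))
  have ht := sq_le_sq.2 (hp t (p s) (hpC s))
  rcases hst.lt_or_eq with hst | rfl
  · nlinarith [mul_pos (sub_pos.2 hlt) (sub_pos.2 hst)]
  · exact hlt.false

section NearestPoint

/-- Of the at most two nearest points of `closure A`, the left one. Being choice-free, it commutes
with every translation preserving `A`. -/
noncomputable def nearestPoint (A : Set ℝ) (t : ℝ) : ℝ :=
  open Classical in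
  if t - infDist t A ∈ closure A then t - infDist t A else t + infDist t A

variable {A : Set ℝ}

theorem abs_sub_nearestPoint (A : Set ℝ) (t : ℝ) : |t - nearestPoint A t| = infDist t A := by
  unfold nearestPoint
  split_ifs <;> simp [abs_of_nonneg infDist_nonneg]

theorem infDist_le_abs_sub {t y : ℝ} (hy : y ∈ closure A) : infDist t A ≤ |t - y| := by
  rw [← infDist_closure, ← Real.dist_eq]
  exact infDist_le_dist_of_mem hy

theorem nearestPoint_mem_closure (hA : A.Nonempty) (t : ℝ) : nearestPoint A t ∈ closure A := by
  unfold nearestPoint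
  split_ifs with h
  · exact h
  obtain ⟨y, hy, hty⟩ := isClosed_closure.exists_infDist_eq_dist hA.closure t
  rw [infDist_closure, Real.dist_eq] at hty
  rcases abs_eq infDist_nonneg |>.1 hty.symm with hy' | hy'
  · exact absurd (by rwa [← hy', sub_sub_cancel]) h
  · rwa [show t + infDist t A = y by linarith]

theorem monotone_nearestPoint (hA : A.Nonempty) : Monotone (nearestPoint A) :=
  monotone_of_abs_sub_le (nearestPoint_mem_closure hA) fun t _ hc =>
    (abs_sub_nearestPoint A t).symm ▸ infDist_le_abs_sub hc

theorem nearestPoint_add_period {T : ℝ} (hA : (· + T) ⁻¹' A = A) (t : ℝ) :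
    nearestPoint A (t + T) = nearestPoint A t + T := by
  have hcl : (· + T) ⁻¹' closure A = closure A := by
    simpa [hA] using (Homeomorph.addRight T).preimage_closure A
  have hd : infDist (t + T) A = infDist t A :=
    calc infDist (t + T) A = infDist (t + T) ((· + T) '' ((· + T) ⁻¹' A)) := by
          rw [image_preimage_eq A (add_right_surjective T)]
      _ = infDist t A := by rw [infDist_image (isometry_add_right T), hA]
  have hmem (x : ℝ) : x + T ∈ closure A ↔ x ∈ closure A := Set.ext_iff.1 hcl x
  unfold nearestPoint
  rw [hd, show t + T - infDist t A = t - infDist t A + T by ring, hmem]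
  split_ifs <;> ring

noncomputable def contractToward (A : Set ℝ) (c t : ℝ) : ℝ := c * t + (1 - c) * nearestPoint A t

theorem contractToward_mapsTo (hA : A.Nonempty) {c R : ℝ} (hc : 0 < c) :
    MapsTo (contractToward A c) (thickening R A) (thickening (c * R) A) := by
  intro t ht
  rw [mem_thickening_iff_infDist_lt hA] at ht ⊢
  calc infDist (contractToward A c t) A
      ≤ |contractToward A c t - nearestPoint A t| :=
        infDist_le_abs_sub (nearestPoint_mem_closure hA t)
    _ = c * infDist t A := by
      rw [show contractToward A c t - nearestPoint A t = c * (t - nearestPoint A t) by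
        unfold contractToward; ring, abs_mul, abs_of_pos hc, abs_sub_nearestPoint]
    _ < c * R := by gcongr

theorem monotone_contractToward (hA : A.Nonempty) {c : ℝ} (hc0 : 0 ≤ c) (hc1 : c ≤ 1) :
    Monotone (contractToward A c) :=
  (monotone_id.const_mul hc0).add ((monotone_nearestPoint hA).const_mul (sub_nonneg.2 hc1))

theorem antilipschitzWith_contractToward (hA : A.Nonempty) {c : ℝ} (hc0 : 0 < c) (hc1 : c ≤ 1) :
    AntilipschitzWith (Real.toNNReal c⁻¹) (contractToward A c) := by
  refine AntilipschitzWith.of_le_mul_dist fun x y => ?_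
  wlog hxy : x ≤ y generalizing x y
  · rw [dist_comm, dist_comm (contractToward A c x)]
    exact this y x (le_of_not_ge hxy)
  have hp := monotone_nearestPoint hA hxy
  rw [Real.coe_toNNReal _ (by positivity), le_inv_mul_iff₀ hc0, dist_comm,
    dist_comm (contractToward A c x), Real.dist_eq, Real.dist_eq, abs_of_nonneg (sub_nonneg.2 hxy)]
  calc c * (y - x) ≤ contractToward A c y - contractToward A c x := by
        unfold contractToward; nlinarith
    _ ≤ _ := le_abs_self _

theorem volume_le_mul_volume_image_contractToward (hA : A.Nonempty) {c : ℝ} (hc0 : 0 < c)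
    (hc1 : c ≤ 1) (S : Set ℝ) :
    volume S ≤ ENNReal.ofReal c⁻¹ * volume (contractToward A c '' S) := by
  have := (antilipschitzWith_contractToward hA hc0 hc1).le_hausdorffMeasure_image zero_le_one S
  rwa [hausdorffMeasure_real, ENNReal.rpow_one] at this

theorem contractToward_add_period {T : ℝ} (hA : (· + T) ⁻¹' A = A) (c t : ℝ) :
    contractToward A c (t + T) = contractToward A c t + T := by
  rw [contractToward, contractToward, nearestPoint_add_period hA]; ring

theorem hasThickeningGrowth_real : HasThickeningGrowth ℝ 1 := by
  intro A r R hr hrR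
  rcases A.eq_empty_or_nonempty with rfl | hA
  · simp
  have hR := hr.trans_le hrR
  have hc0 : 0 < r / R := div_pos hr hR
  have hc1 : r / R ≤ 1 := (div_le_one hR).2 hrR
  have hmaps : MapsTo (contractToward A (r / R)) (thickening R A) (thickening r A) := by
    simpa [div_mul_cancel₀ r hR.ne'] using contractToward_mapsTo hA (R := R) hc0
  calc volume (thickening R A)
      ≤ ENNReal.ofReal (r / R)⁻¹ * volume (contractToward A (r / R) '' thickening R A) :=
        volume_le_mul_volume_image_contractToward hA hc0 hc1 _
    _ ≤ ENNReal.ofReal (R / r) ^ 1 * volume (thickening r A) := by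
        rw [pow_one, inv_div]; gcongr; exact hmaps.image_subset

end NearestPoint

theorem QuotientAddGroup.preimage_mk_thickening {M : Type*} [SeminormedAddCommGroup M]
    (S : AddSubgroup M) (δ : ℝ) (B : Set (M ⧸ S)) :
    ((↑) : M → M ⧸ S) ⁻¹' thickening δ B = thickening δ (((↑) : M → M ⧸ S) ⁻¹' B) := by
  ext t
  simp only [mem_preimage, mem_thickening_iff]
  constructor
  · rintro ⟨b, hb, hd⟩
    rw [dist_eq_norm] at hd
    obtain ⟨m, hm, hmδ⟩ := QuotientAddGroup.norm_lt_iff.1 hd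
    refine ⟨t - m, ?_, by simpa [dist_eq_norm] using hmδ⟩
    simpa [QuotientAddGroup.mk_sub, hm] using hb
  · rintro ⟨s, hs, hd⟩
    refine ⟨s, hs, lt_of_le_of_lt ?_ hd⟩
    rw [dist_eq_norm, dist_eq_norm, ← QuotientAddGroup.mk_sub]
    exact QuotientAddGroup.norm_mk_le_norm

theorem AddCircle.hasThickeningGrowth (T : ℝ) [Fact (0 < T)] :
    HasThickeningGrowth (AddCircle T) 1 := by
  intro B r R hr hrR
  set A : Set ℝ := ((↑) : ℝ → AddCircle T) ⁻¹' B
  have hvol (δ t : ℝ) : volume (thickening δ B) = volume (thickening δ A ∩ Ioc t (t + T)) := by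
    rw [AddCircle.add_projection_respects_measure T t isOpen_thickening.measurableSet,
      QuotientAddGroup.preimage_mk_thickening]
  rcases A.eq_empty_or_nonempty with hA | hA
  · simp [hvol R 0, hA]
  have hper : (· + T) ⁻¹' A = A := by
    ext x; simp [A]
  have hR := hr.trans_le hrR
  have hc0 : 0 < r / R := div_pos hr hR
  have hc1 : r / R ≤ 1 := (div_le_one hR).2 hrR
  set f := contractToward A (r / R)
  have hmaps :
      MapsTo f (thickening R A ∩ Ioc 0 (0 + T)) (thickening r A ∩ Icc (f 0) (f 0 + T)) := by
    have hf := monotone_contractToward hA hc0.le hc1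
    rintro t ⟨ht, ht0, htT⟩
    refine ⟨by simpa [div_mul_cancel₀ r hR.ne'] using contractToward_mapsTo hA (R := R) hc0 ht,
      hf ht0.le, ?_⟩
    rw [← contractToward_add_period hper]
    exact hf htT
  calc volume (thickening R B) = volume (thickening R A ∩ Ioc 0 (0 + T)) := hvol R 0
    _ ≤ ENNReal.ofReal (r / R)⁻¹ * volume (f '' (thickening R A ∩ Ioc 0 (0 + T))) :=
        volume_le_mul_volume_image_contractToward hA hc0 hc1 _
    _ ≤ ENNReal.ofReal (r / R)⁻¹ * volume (thickening r A ∩ Icc (f 0) (f 0 + T)) := by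
        gcongr; exact hmaps.image_subset
    _ = ENNReal.ofReal (R / r) ^ 1 * volume (thickening r B) := by
        rw [hvol r (f 0), measure_congr ((ae_eq_refl _).inter Ioc_ae_eq_Icc.symm), pow_one, inv_div]

theorem HasThickeningGrowth.of_subsingleton (X : Type*) [PseudoMetricSpace X] [MeasureSpace X]
    [Subsingleton X] : HasThickeningGrowth X 0 := by
  have hthick {δ : ℝ} (hδ : 0 < δ) (A : Set X) : thickening δ A = A := by
    ext x
    simp only [mem_thickening_iff]
    exact ⟨fun ⟨y, hy, _⟩ => Subsingleton.elim y x ▸ hy, fun hx => ⟨x, hx, by simpa using hδ⟩⟩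
  intro A r R hr hrR
  rw [hthick hr, hthick (hr.trans_le hrR), pow_zero, one_mul]

theorem Isometry.preimage_thickening {X Y : Type*} [PseudoMetricSpace X] [PseudoMetricSpace Y]
    {f : X → Y} (hf : Isometry f) (hsurj : Function.Surjective f) (δ : ℝ) (B : Set Y) :
    f ⁻¹' thickening δ B = thickening δ (f ⁻¹' B) := by
  ext x
  simp only [mem_preimage, mem_thickening_iff]
  constructor
  · rintro ⟨b, hb, hd⟩
    obtain ⟨y, rfl⟩ := hsurj b
    exact ⟨y, hb, by rwa [hf.dist_eq] at hd⟩
  · rintro ⟨y, hy, hd⟩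
    exact ⟨f y, hy, by rwa [hf.dist_eq]⟩

theorem HasThickeningGrowth.of_isometry {X Y : Type*} [PseudoMetricSpace X] [MeasureSpace X]
    [PseudoMetricSpace Y] [MeasureSpace Y] {p : ℕ} (hY : HasThickeningGrowth Y p) (e : X ≃ᵐ Y)
    (he : MeasurePreserving e) (hiso : Isometry e) : HasThickeningGrowth X p := by
  intro A r R hr hrR
  have hvol (δ : ℝ) : volume (thickening δ A) = volume (thickening δ (e.symm ⁻¹' A)) := by
    rw [← he.measure_preimage_equiv, hiso.preimage_thickening e.surjective, ← preimage_comp,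
      e.symm_comp_self, preimage_id]
  rw [hvol, hvol]
  exact hY _ hr hrR

theorem isometry_piFinSuccAbove_zero (X : Type*) [PseudoMetricSpace X] [MeasurableSpace X]
    (k : ℕ) : Isometry (MeasurableEquiv.piFinSuccAbove (fun _ : Fin (k + 1) => X) 0) := by
  refine Isometry.of_dist_eq fun x y => ?_
  change max (dist (x 0) (y 0)) (dist (Fin.removeNth 0 x) (Fin.removeNth 0 y)) = dist x y
  refine le_antisymm (max_le (dist_le_pi_dist x y 0)
    ((dist_pi_le_iff dist_nonneg).2 fun j => dist_le_pi_dist x y _)) ?_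
  refine (dist_pi_le_iff (le_max_of_le_left dist_nonneg)).2 fun i => ?_
  cases i using Fin.cases with
  | zero => exact le_max_left _ _
  | succ j =>
    exact (dist_le_pi_dist (Fin.removeNth 0 x) (Fin.removeNth 0 y) j).trans (le_max_right _ _)

section Prod

variable {X Y : Type*} [PseudoMetricSpace X] [PseudoMetricSpace Y]

def prodNbhd (E : Set (X × Y)) (a b : ℝ) : Set (X × Y) :=
  {z | ∃ e ∈ E, dist z.1 e.1 < a ∧ dist z.2 e.2 < b}

theorem isOpen_prodNbhd (E : Set (X × Y)) (a b : ℝ) : IsOpen (prodNbhd E a b) := by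
  have : prodNbhd E a b = ⋃ e ∈ E, ball e.1 a ×ˢ ball e.2 b := by
    ext z; simp only [prodNbhd, mem_iUnion, mem_prod, mem_ball, exists_prop]; rfl
  rw [this]
  exact isOpen_biUnion fun e _ => isOpen_ball.prod isOpen_ball

theorem thickening_eq_prodNbhd (E : Set (X × Y)) (δ : ℝ) : thickening δ E = prodNbhd E δ δ := by
  ext z
  simp [mem_thickening_iff, prodNbhd, Prod.dist_eq]

theorem preimage_swap_prodNbhd (E : Set (X × Y)) (a b : ℝ) :
    Prod.swap ⁻¹' prodNbhd E a b = prodNbhd (Prod.swap ⁻¹' E) b a := by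
  ext z
  simp only [prodNbhd, Prod.exists, preimage_ofPred_eq, Prod.fst_swap, Prod.snd_swap,
    mem_ofPred_eq, mem_preimage, Prod.swap_prod_mk]
  exact ⟨fun ⟨x, y, he, h1, h2⟩ => ⟨y, x, he, h2, h1⟩, fun ⟨y, x, he, h2, h1⟩ => ⟨x, y, he, h1, h2⟩⟩

theorem preimage_prodNbhd_mk_right (E : Set (X × Y)) (a b : ℝ) (y : Y) :
    (fun x => (x, y)) ⁻¹' prodNbhd E a b =
      thickening a (Prod.fst '' (E ∩ {e | dist y e.2 < b})) := by
  ext x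
  simp only [prodNbhd, Prod.exists, preimage_ofPred_eq, mem_ofPred_eq, mem_thickening_iff,
    mem_image, mem_inter_iff, exists_and_right, exists_eq_right]
  exact ⟨fun ⟨u, v, he, h1, h2⟩ => ⟨u, ⟨v, he, h2⟩, h1⟩,
    fun ⟨u, ⟨v, he, h2⟩, h1⟩ => ⟨u, v, he, h1, h2⟩⟩

variable [MeasureSpace X] [MeasureSpace Y] [SFinite (volume : Measure X)]
  [SFinite (volume : Measure Y)] [OpensMeasurableSpace (X × Y)]

theorem HasThickeningGrowth.volume_prodNbhd_le {p : ℕ} (hX : HasThickeningGrowth X p)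
    (E : Set (X × Y)) {r R : ℝ} (hr : 0 < r) (hrR : r ≤ R) (b : ℝ) :
    volume (prodNbhd E R b) ≤ ENNReal.ofReal (R / r) ^ p * volume (prodNbhd E r b) := by
  simp only [Measure.volume_eq_prod,
    Measure.prod_apply_symm (isOpen_prodNbhd E _ b).measurableSet, preimage_prodNbhd_mk_right]
  rw [← lintegral_const_mul' _ _ (by finiteness)]
  exact lintegral_mono fun y => hX _ hr hrR

end Prod

theorem HasThickeningGrowth.prod {X Y : Type*} [PseudoMetricSpace X] [PseudoMetricSpace Y]
    [MeasureSpace X] [MeasureSpace Y] [SFinite (volume : Measure X)]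
    [SFinite (volume : Measure Y)] [SecondCountableTopology X] [SecondCountableTopology Y]
    [OpensMeasurableSpace X] [OpensMeasurableSpace Y] {p q : ℕ}
    (hX : HasThickeningGrowth X p) (hY : HasThickeningGrowth Y q) :
    HasThickeningGrowth (X × Y) (p + q) := by
  intro E r R hr hrR
  have hswap (a b : ℝ) :
      volume (prodNbhd E a b) = volume (prodNbhd (Prod.swap ⁻¹' E) b a) := by
    rw [← preimage_swap_prodNbhd, Measure.volume_eq_prod, Measure.volume_eq_prod,
      Measure.measurePreserving_swap.measure_preimage
        (isOpen_prodNbhd E a b).measurableSet.nullMeasurableSet]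
  set K := ENNReal.ofReal (R / r)
  calc volume (thickening R E) = volume (prodNbhd E R R) := by rw [thickening_eq_prodNbhd]
    _ ≤ K ^ p * volume (prodNbhd E r R) := hX.volume_prodNbhd_le E hr hrR R
    _ = K ^ p * volume (prodNbhd (Prod.swap ⁻¹' E) R r) := by rw [hswap]
    _ ≤ K ^ p * (K ^ q * volume (prodNbhd (Prod.swap ⁻¹' E) r r)) := by
        gcongr; exact hY.volume_prodNbhd_le _ hr hrR r
    _ = K ^ (p + q) * volume (thickening r E) := by
        rw [thickening_eq_prodNbhd, hswap, pow_add, mul_assoc]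

theorem HasThickeningGrowth.pi {X : Type*} [PseudoMetricSpace X] [MeasureSpace X]
    [SigmaFinite (volume : Measure X)] [SecondCountableTopology X] [OpensMeasurableSpace X]
    {p : ℕ} (hX : HasThickeningGrowth X p) : ∀ k : ℕ, HasThickeningGrowth (Fin k → X) (k * p)
  | 0 => by simpa using HasThickeningGrowth.of_subsingleton (Fin 0 → X)
  | k + 1 => by
    rw [show (k + 1) * p = p + k * p by ring]
    exact (hX.prod (HasThickeningGrowth.pi hX k)).of_isometry _
      (volume_preserving_piFinSuccAbove (fun _ => X) 0) (isometry_piFinSuccAbove_zero X k)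

theorem stmt_12_general (n : ℕ)
    (E : Set ((Fin (n - 1) → ℝ) × (Fin n → Torus)))
    (Δ Δ₁ ρ : ℝ) (hΔ : 0 < Δ) (hΔ₁ : 0 < Δ₁) (hρ : 0 < ρ) :
    volume (Metric.thickening (ρ + Δ * ρ + Δ₁ * ρ) E) ≤
      ENNReal.ofReal ((1 + (1 + Δ₁) / Δ) ^ (2 * n - 1)) *
        volume (Metric.thickening (Δ * ρ) E) := by
  have hJ : HasThickeningGrowth ((Fin (n - 1) → ℝ) × (Fin n → Torus)) (2 * n - 1) := by
    convert (hasThickeningGrowth_real.pi (n - 1)).prod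
      ((AddCircle.hasThickeningGrowth (2 * Real.pi)).pi n) using 1
    omega
  have hratio : (ρ + Δ * ρ + Δ₁ * ρ) / (Δ * ρ) = 1 + (1 + Δ₁) / Δ := by
    field_simp; ring
  rw [ENNReal.ofReal_pow (by positivity), ← hratio]
  exact hJ E (mul_pos hΔ hρ) (by nlinarith)

/-- Neighborhood growth bound in `J = ℝ^{n-1} × 𝕋ⁿ`: for any bounded
measurable `E ⊆ J` and `Δ, Δ₁, ρ > 0`, the Haar measure of neighborhoods satisfies
`ν(V_{ρ+Δρ+Δ₁ρ}(E)) ≤ (1 + (1+Δ₁)/Δ)^{2n-1} · ν(V_{Δρ}(E))`,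
where `V_δ(E)` is the `δ`-neighborhood of `E` in the invariant metric on `J`. -/
theorem stmt_12 (n : ℕ) (hn : 1 ≤ n)
    (E : Set ((Fin (n - 1) → ℝ) × (Fin n → Torus)))
    (hE_bdd : Bornology.IsBounded E) (hE_meas : MeasurableSet E)
    (Δ Δ₁ ρ : ℝ) (hΔ : 0 < Δ) (hΔ₁ : 0 < Δ₁) (hρ : 0 < ρ) :
    volume (Metric.thickening (ρ + Δ * ρ + Δ₁ * ρ) E) ≤
      ENNReal.ofReal ((1 + (1 + Δ₁) / Δ) ^ (2 * n - 1)) *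
        volume (Metric.thickening (Δ * ρ) E) :=
  stmt_12_general n E Δ Δ₁ ρ hΔ hΔ₁ hρ
end

section
/- If E(λ₁,...,λ_n,v₁,...,v_n) generates a dense subgroup of ℝ^{n−1} × 𝕋ⁿ, then for all nonzero integers k₁,...,k_n, the set E(k₁λ₁,...,k_nλ_n, k₁v₁,...,k_nv_n) also generates a dense subgroup of ℝ^{n−1} × 𝕋ⁿ. -/
open scoped Real

/-- The `j`-th of the `n` vectors of `E(λ₁,...,λ_n, v₁,...,v_n) ⊆ ℝ^{n-1} × 𝕋ⁿ`:
for `j < n-1` it is `(0,...,λ_j,...,0 ; 0,...,v_j,...,0)` (entries in position `j`),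
and for `j = n-1` (the last one) it is `(−λ_n,...,−λ_n ; 0,...,0,v_n)`. -/
noncomputable def Evec (n : ℕ) (lam : Fin n → ℝ) (v : Fin n → Torus) (j : Fin n) :
    (Fin (n - 1) → ℝ) × (Fin n → Torus) :=
  ⟨if (j : ℕ) < n - 1 then (fun i => if (i : ℕ) = (j : ℕ) then lam j else 0)
    else (fun _ => - lam j),
   fun i => if i = j then v j else 0⟩

/-- The set `E(λ₁,...,λ_n, v₁,...,v_n)`. -/
noncomputable def Eset (n : ℕ) (lam : Fin n → ℝ) (v : Fin n → Torus) :
    Set ((Fin (n - 1) → ℝ) × (Fin n → Torus)) :=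
  Set.range (Evec n lam v)

/-!
Write `e_j` for the vectors of `E(λ, v)`; those of `E(kλ, kv)` are `k_j • e_j`. With
`K = ∏ k_j`, every `K • e_j` is a multiple of `k_j • e_j`, so multiplication by `K` maps the
subgroup generated by `E(λ, v)` into the one generated by `E(kλ, kv)`. Since
`ℝ^{n-1} × 𝕋ⁿ` is divisible, multiplication by `K ≠ 0` is a continuous surjection, and
therefore sends dense sets to dense sets.
-/

open Set

theorem Dense.zsmul_image {G : Type*} [AddCommGroup G] [TopologicalSpace G]
    [IsTopologicalAddGroup G] [DivisibleBy G ℤ] {s : Set G} (hs : Dense s) {m : ℤ}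
    (hm : m ≠ 0) : Dense ((fun x => m • x) '' s) :=
  DenseRange.dense_image
    (Function.Surjective.denseRange fun y => ⟨DivisibleBy.div y m, DivisibleBy.div_cancel y hm⟩)
    (continuous_zsmul m) hs

namespace AddSubgroup

theorem prod_zsmul_mem_closure_range_zsmul {G ι : Type*} [AddCommGroup G]
    [Fintype ι] (f : ι → G) (k : ι → ℤ) {x : G} (hx : x ∈ closure (range f)) :
    (∏ j, k j) • x ∈ closure (range fun j => k j • f j) := by
  suffices closure (range f) ≤ (closure (range fun j => k j • f j)).comap
      (zsmulAddGroupHom (∏ j, k j)) from this hx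
  rw [closure_le]
  rintro _ ⟨j, rfl⟩
  obtain ⟨c, hc⟩ := Finset.dvd_prod_of_mem k (Finset.mem_univ j)
  rw [SetLike.mem_coe, mem_comap, zsmulAddGroupHom_apply, hc, mul_comm, mul_smul]
  exact zsmul_mem (subset_closure (mem_range_self j)) c

theorem dense_closure_range_zsmul {G ι : Type*} [AddCommGroup G]
    [TopologicalSpace G] [IsTopologicalAddGroup G] [DivisibleBy G ℤ] [Fintype ι]
    (f : ι → G) {k : ι → ℤ} (hk : ∀ j, k j ≠ 0) (hf : Dense (closure (range f) : Set G)) :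
    Dense (closure (range fun j => k j • f j) : Set G) :=
  (hf.zsmul_image (Finset.prod_ne_zero_iff.mpr fun j _ => hk j)).mono <| by
    rintro _ ⟨x, hx, rfl⟩
    exact prod_zsmul_mem_closure_range_zsmul f k hx

end AddSubgroup

theorem Evec_mul_zsmul (n : ℕ) (lam : Fin n → ℝ) (v : Fin n → Torus) (k : Fin n → ℤ)
    (j : Fin n) :
    Evec n (fun j => (k j : ℝ) * lam j) (fun j => k j • v j) j = k j • Evec n lam v j := by
  ext i
  · by_cases hj : (j : ℕ) < n - 1
    · by_cases hi : (i : ℕ) = j <;> simp [Evec, hj, hi]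
    · simp [Evec, hj]
  · by_cases hi : i = j <;> simp [Evec, hi]

theorem Eset_mul_zsmul (n : ℕ) (lam : Fin n → ℝ) (v : Fin n → Torus) (k : Fin n → ℤ) :
    Eset n (fun j => (k j : ℝ) * lam j) (fun j => k j • v j) =
      range fun j => k j • Evec n lam v j :=
  congrArg range (funext (Evec_mul_zsmul n lam v k))

theorem stmt_15_general (n : ℕ)
    (lam : Fin n → ℝ)
    (v : Fin n → Torus)
    (hdense : Dense (↑(AddSubgroup.closure (Eset n lam v)) :
        Set ((Fin (n - 1) → ℝ) × (Fin n → Torus))))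
    (k : Fin n → ℤ) (hk : ∀ j, k j ≠ 0) :
    Dense (↑(AddSubgroup.closure (Eset n (fun j => (k j : ℝ) * lam j)
        (fun j => k j • v j))) : Set ((Fin (n - 1) → ℝ) × (Fin n → Torus))) := by
  rw [Eset_mul_zsmul]
  exact AddSubgroup.dense_closure_range_zsmul (Evec n lam v) hk hdense

/-- if `E(λ₁,...,λ_n,v₁,...,v_n)` generates a dense subgroup of
`ℝ^{n-1} × 𝕋ⁿ` then so does `E(k₁λ₁,...,k_nλ_n, k₁v₁,...,k_nv_n)` for any nonzero
integers `k₁,...,k_n`. -/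
theorem stmt_15 (n : ℕ) (hn : 1 ≤ n)
    (lam : Fin n → ℝ) (hlam : ∀ j, lam j < 0)
    (v : Fin n → Torus)
    (hdense : Dense (↑(AddSubgroup.closure (Eset n lam v)) :
        Set ((Fin (n - 1) → ℝ) × (Fin n → Torus))))
    (k : Fin n → ℤ) (hk : ∀ j, k j ≠ 0) :
    Dense (↑(AddSubgroup.closure (Eset n (fun j => (k j : ℝ) * lam j)
        (fun j => k j • v j))) : Set ((Fin (n - 1) → ℝ) × (Fin n → Torus))) :=
  stmt_15_general n lam v hdense k hk
end

section
/- If λ₁,...,λ_n < 0 and E(λ₁,...,λ_n,v₁,...,v_n) generates a dense subgroup of ℝ^{n−1} × 𝕋ⁿ, then it generates a dense semigroup: the set of linear combinations of the n vectors of E(λ₁,...,λ_n,v₁,...,v_n) with coefficients in ℕ is dense in ℝ^{n−1} × 𝕋ⁿ. -/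
open scoped Real

/-!
Let `e_1, …, e_n` be the vectors of `E` and `x_k = ∑_j ⌊k λ_n / λ_j⌋ e_j`, so that `x_k` contains
exactly `k` copies of `e_n`. Since all `λ_j < 0`, the real coordinates of `x_k` are
`(⌊k λ_n / λ_j⌋ - k λ_n / λ_j) λ_j ∈ [0, -λ_j]`, so the `x_k` stay in a compact set and some
`x_{k₂} - x_{k₁}` with `k₂ - k₁` as large as we like is close to `0`. For `k₂ - k₁` large every
coefficient increases by at least one, so `x_{k₂} - x_{k₁} - e_j` lies in the semigroup and is
close to `-e_j`. Thus the closure of the semigroup is a closed subgroup containing `E`.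
-/

open Filter Topology

section TopologicalAddGroup

variable {G : Type*} [AddGroup G] [TopologicalSpace G] [IsTopologicalAddGroup G]

theorem exists_add_le_sub_mem_of_mem_isCompact {K : Set G} (hK : IsCompact K) {x : ℕ → G}
    (hx : ∀ k, x k ∈ K) {U : Set G} (hU : U ∈ 𝓝 0) (D : ℕ) :
    ∃ k₁ k₂, k₁ + D ≤ k₂ ∧ x k₂ - x k₁ ∈ U := by
  obtain ⟨p, -, hp⟩ := hK.exists_clusterPt (f := map x atTop)
    (le_principal_iff.mpr (mem_map.mpr (univ_mem' hx)))
  have hsub : Tendsto (fun q : G × G => q.1 - q.2) (𝓝 p ×ˢ 𝓝 p) (𝓝 0) := by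
    simpa [nhds_prod_eq] using (continuous_sub (G := G)).tendsto (p, p)
  obtain ⟨W₁, hW₁, W₂, hW₂, hW⟩ := mem_prod_iff.mp (hsub hU)
  have hfreq : ∃ᶠ k in atTop, x k ∈ W₁ ∩ W₂ :=
    mapClusterPt_iff_frequently.mp hp _ (inter_mem hW₁ hW₂)
  obtain ⟨k₁, -, hk₁⟩ := frequently_atTop.mp hfreq 0
  obtain ⟨k₂, hk, hk₂⟩ := frequently_atTop.mp hfreq (k₁ + D)
  exact ⟨k₁, k₂, hk, hW (Set.mk_mem_prod hk₂.1 hk₁.2)⟩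

theorem neg_mem_closure_of_mem_isCompact (M : AddSubmonoid G) (s : G) {K : Set G}
    (hK : IsCompact K) {x : ℕ → G} (hx : ∀ k, x k ∈ K) (D : ℕ)
    (hM : ∀ k₁ k₂, k₁ + D ≤ k₂ → x k₂ - x k₁ - s ∈ M) : -s ∈ closure (M : Set G) := by
  rw [mem_closure_iff_nhds]
  intro t ht
  have hU : (· - s) ⁻¹' t ∈ 𝓝 (0 : G) :=
    (continuous_sub_right s).continuousAt.preimage_mem_nhds (by simpa using ht)
  obtain ⟨k₁, k₂, hk, hkU⟩ := exists_add_le_sub_mem_of_mem_isCompact hK hx hU D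
  exact ⟨_, hkU, hM k₁ k₂ hk⟩

theorem dense_addSubmonoidClosure_of_neg_mem_closure {S : Set G}
    (hdense : Dense (AddSubgroup.closure S : Set G))
    (hneg : ∀ s ∈ S, -s ∈ closure (AddSubmonoid.closure S : Set G)) :
    Dense (AddSubmonoid.closure S : Set G) := by
  refine dense_closure.mp (hdense.mono fun z hz => ?_)
  have hz' : z ∈ AddSubmonoid.closure (S ∪ -S) := by
    rwa [← AddSubgroup.closure_toAddSubmonoid]
  refine (AddSubmonoid.closure_le (S := (AddSubmonoid.closure S).topologicalClosure)).mpr ?_ hz'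
  rintro y (hy | hy)
  · exact subset_closure (AddSubmonoid.subset_closure hy)
  · rw [AddSubmonoid.coe_topologicalClosure]
    simpa using hneg _ hy

end TopologicalAddGroup

theorem sum_nsmul_sub_sum_nsmul_sub_mem_closure {G ι : Type*} [AddCommGroup G] [Fintype ι]
    [DecidableEq ι] (e : ι → G) {a b : ι → ℕ} (j : ι) (h : b + Pi.single j 1 ≤ a) :
    ∑ i, a i • e i - ∑ i, b i • e i - e j ∈ AddSubmonoid.closure (Set.range e) := by
  obtain ⟨c, rfl⟩ : ∃ c, a = b + Pi.single j 1 + c := ⟨a - (b + Pi.single j 1), by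
    ext i; have := h i; simp only [Pi.add_apply, Pi.sub_apply] at this ⊢; omega⟩
  have hsingle : ∑ i, (Pi.single j 1 : ι → ℕ) i • e i = e j := by
    simp [Pi.single_apply, ite_smul]
  simp only [Pi.add_apply, add_nsmul, Finset.sum_add_distrib, hsingle]
  rw [show ∀ x y z : G, x + y + z - x - y = z by intros; abel]
  exact AddSubmonoid.sum_mem _ fun i _ =>
    AddSubmonoid.nsmul_mem _ (AddSubmonoid.subset_closure (Set.mem_range_self i)) _

theorem floor_mul_add_one_le_floor_mul {ρ : ℝ} (hρ : 0 ≤ ρ) {D k₁ k₂ : ℕ} (hD : 1 ≤ D * ρ)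
    (hk : k₁ + D ≤ k₂) : ⌊k₁ * ρ⌋₊ + 1 ≤ ⌊k₂ * ρ⌋₊ := by
  rw [← Nat.floor_add_one (by positivity)]
  refine Nat.floor_mono ?_
  have : ((k₁ + D : ℕ) : ℝ) ≤ k₂ := by exact_mod_cast hk
  push_cast at this
  nlinarith

section Evec

variable {n : ℕ} (lam : Fin n → ℝ) (v : Fin n → Torus)

def lastIndex (hn : 1 ≤ n) : Fin n := ⟨n - 1, Nat.sub_one_lt (by omega)⟩

theorem Evec_fst_apply (hn : 1 ≤ n) (j : Fin n) (i : Fin (n - 1)) :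
    (Evec n lam v j).1 i = (if j = Fin.castLE (Nat.sub_le n 1) i then lam j else 0)
      - (if j = lastIndex hn then lam j else 0) := by
  have := i.2
  have := j.2
  simp only [Evec, lastIndex, Fin.ext_iff, Fin.val_castLE]
  split_ifs <;> beta_reduce <;> (try split_ifs) <;> first | omega | ring

theorem fst_sum_nsmul_Evec_apply (hn : 1 ≤ n) (a : Fin n → ℕ) (i : Fin (n - 1)) :
    (∑ j, a j • Evec n lam v j).1 i
      = a (Fin.castLE (Nat.sub_le n 1) i) * lam (Fin.castLE (Nat.sub_le n 1) i)
        - a (lastIndex hn) * lam (lastIndex hn) := by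
  simp [Prod.fst_sum, Finset.sum_apply, Evec_fst_apply lam v hn, mul_sub, Finset.sum_sub_distrib]

noncomputable def floorCoeff (hn : 1 ≤ n) (k : ℕ) (j : Fin n) : ℕ :=
  ⌊(k : ℝ) * (lam (lastIndex hn) / lam j)⌋₊

variable {lam}

theorem fst_sum_floorCoeff_mem_Icc (hn : 1 ≤ n) (hlam : ∀ j, lam j < 0) (k : ℕ)
    (i : Fin (n - 1)) :
    (∑ j, floorCoeff lam hn k j • Evec n lam v j).1 i
      ∈ Set.Icc 0 (-lam (Fin.castLE (Nat.sub_le n 1) i)) := by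
  set i' := Fin.castLE (Nat.sub_le n 1) i
  set y := (k : ℝ) * (lam (lastIndex hn) / lam i')
  have hy : 0 ≤ y := mul_nonneg k.cast_nonneg (div_nonneg_of_nonpos (hlam _).le (hlam _).le)
  have hlast : floorCoeff lam hn k (lastIndex hn) = k := by
    simp [floorCoeff, div_self (hlam _).ne]
  have hky : (k : ℝ) * lam (lastIndex hn) = y * lam i' := by
    simp only [y, mul_assoc, div_mul_cancel₀ _ (hlam i').ne]
  rw [fst_sum_nsmul_Evec_apply lam v hn, hlast, hky]
  have h₁ := Nat.floor_le hy
  have h₂ := Nat.lt_floor_add_one y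
  have := hlam i'
  constructor <;> simp only [floorCoeff] <;> nlinarith

theorem floorCoeff_add_single_le (hn : 1 ≤ n) (hlam : ∀ j, lam j < 0) (j₀ : Fin n) {k₁ k₂ : ℕ}
    (hk : k₁ + ⌈lam j₀ / lam (lastIndex hn)⌉₊ ≤ k₂) :
    floorCoeff lam hn k₁ + Pi.single j₀ 1 ≤ floorCoeff lam hn k₂ := by
  intro j
  have hρ : 0 ≤ lam (lastIndex hn) / lam j := div_nonneg_of_nonpos (hlam _).le (hlam _).le
  rcases eq_or_ne j j₀ with rfl | hj
  · simp only [Pi.add_apply, Pi.single_eq_same, floorCoeff]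
    refine floor_mul_add_one_le_floor_mul hρ ?_ hk
    calc (1 : ℝ) = lam j / lam (lastIndex hn) * (lam (lastIndex hn) / lam j) := by
          field_simp [(hlam j).ne, (hlam (lastIndex hn)).ne]
      _ ≤ _ := mul_le_mul_of_nonneg_right (Nat.le_ceil _) hρ
  · simp only [Pi.add_apply, Pi.single_eq_of_ne hj, add_zero, floorCoeff]
    exact Nat.floor_mono (mul_le_mul_of_nonneg_right (by exact_mod_cast (by omega : k₁ ≤ k₂)) hρ)

theorem neg_Evec_mem_closure (hn : 1 ≤ n) (hlam : ∀ j, lam j < 0) (j₀ : Fin n) :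
    -Evec n lam v j₀ ∈ closure (AddSubmonoid.closure (Eset n lam v) : Set _) := by
  refine neg_mem_closure_of_mem_isCompact _ _
    ((isCompact_univ_pi fun i => isCompact_Icc).prod isCompact_univ)
    (x := fun k => ∑ j, floorCoeff lam hn k j • Evec n lam v j)
    (fun k => ⟨fun i _ => fst_sum_floorCoeff_mem_Icc v hn hlam k i, Set.mem_univ _⟩)
    ⌈lam j₀ / lam (lastIndex hn)⌉₊ fun k₁ k₂ hk => ?_
  exact sum_nsmul_sub_sum_nsmul_sub_mem_closure _ j₀ (floorCoeff_add_single_le hn hlam j₀ hk)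

end Evec

/-- if `λ₁,...,λ_n < 0` and `E(λ₁,...,λ_n,v₁,...,v_n)` generates a dense
subgroup of `ℝ^{n-1} × 𝕋ⁿ`, then it already generates a dense semigroup: the set of
ℕ-linear combinations of its `n` vectors (i.e. the additive submonoid it generates) is
dense in `ℝ^{n-1} × 𝕋ⁿ`. -/
theorem stmt_16 (n : ℕ) (hn : 1 ≤ n)
    (lam : Fin n → ℝ) (hlam : ∀ j, lam j < 0)
    (v : Fin n → Torus)
    (hdense : Dense (↑(AddSubgroup.closure (Eset n lam v)) :
        Set ((Fin (n - 1) → ℝ) × (Fin n → Torus)))) :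
    Dense (↑(AddSubmonoid.closure (Eset n lam v)) :
        Set ((Fin (n - 1) → ℝ) × (Fin n → Torus))) := by
  refine dense_addSubmonoidClosure_of_neg_mem_closure hdense ?_
  rintro _ ⟨j, rfl⟩
  exact neg_Evec_mem_closure v hn hlam j
end

section
/- Conformality of higher derivatives on directionally rich sets: let K ⊂ ℂ be a compact set such that for every x ∈ K the set K_x^dir = ⋂_{δ>0} closure{(y−x)/|y−x| : y ∈ B_δ(x) ∩ (K \ {x})} contains two ℝ-linearly independent vectors, and let f be a C^l map from a neighborhood of K into ℝ² ≅ ℂ such that Df(x) is a conformal linear map for every x ∈ K. Then for every x ∈ K and every 1 ≤ k ≤ l, the k-linear map D^k f(x) : (ℝ²)^k → ℝ² is conformal, i.e. there exists c ∈ ℂ with D^k f(x)(z₁,...,z_k) = c · z₁ · z₂ ⋯ z_k (complex multiplication, identifying ℝ² with ℂ). -/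
/-- The set of limit directions of `K` at `x`:
`K_x^dir = ⋂_{δ>0} closure{(y−x)/|y−x| : y ∈ B_δ(x) ∩ (K \ {x})}`. -/
def dirSet (K : Set ℂ) (x : ℂ) : Set ℂ :=
  ⋂ δ > (0 : ℝ), closure
    {u : ℂ | ∃ y ∈ Metric.ball x δ ∩ (K \ {x}), u = (‖y - x‖)⁻¹ • (y - x)}

/-!
Induction on `k`. Every limit direction of `K` at `x` lies in the tangent cone of `K` at `x`,
which therefore spans `ℂ` over `ℝ`. If `D^k f` maps `K` into the closed subspace of conformal
`k`-linear maps, its derivative at `x` maps the tangent cone, hence all of `ℂ`, into that subspace: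
`D^{k+1} f(x)(a, z₂, …) = d(a) · z₂ ⋯ z_{k+1}`. Symmetry of `D^{k+1} f(x)` in its first two
arguments gives `d(i) = i · d(1)`, so the `ℝ`-linear map `d` is multiplication by `d(1)`.
-/

open Set Filter

section

variable {𝕜 E F : Type*} [NontriviallyNormedField 𝕜] [NormedAddCommGroup E] [NormedSpace 𝕜 E]
  [NormedAddCommGroup F] [NormedSpace 𝕜 F]

theorem Submodule.tangentConeAt_subset {S : Submodule 𝕜 F} (hS : IsClosed (S : Set F))
    {p : F} (hp : p ∈ S) : tangentConeAt 𝕜 (S : Set F) p ⊆ S := by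
  rw [tangentConeAt_eq_biInter_closure]
  refine (biInter_subset_of_mem univ_mem).trans (closure_minimal ?_ hS)
  rintro _ ⟨c, -, d, ⟨-, hd⟩, rfl⟩
  exact S.smul_mem c (by simpa using S.sub_mem hd hp)

theorem DifferentiableAt.fderiv_apply_mem_of_mapsTo {h : E → F} {s : Set E} {x : E}
    {S : Submodule 𝕜 F} (hd : DifferentiableAt 𝕜 h x) (hS : IsClosed (S : Set F))
    (hmaps : MapsTo h s S) (hx : x ∈ s)
    (hspan : Submodule.span 𝕜 (tangentConeAt 𝕜 s x) = ⊤) (a : E) :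
    fderiv 𝕜 h x a ∈ S := by
  have hcone : MapsTo (fderiv 𝕜 h x) (tangentConeAt 𝕜 s x) S := fun u hu =>
    S.tangentConeAt_subset hS (hmaps hx) <| tangentConeAt_mono (image_subset_iff.2 hmaps) <|
      hd.hasFDerivAt.hasFDerivWithinAt.mapsTo_tangent_cone hu
  have : Submodule.span 𝕜 (tangentConeAt 𝕜 s x) ≤ S.comap (fderiv 𝕜 h x).toLinearMap :=
    Submodule.span_le.2 hcone
  exact this (hspan ▸ Submodule.mem_top)

end

theorem dirSet_subset_tangentConeAt (K : Set ℂ) (x : ℂ) : dirSet K x ⊆ tangentConeAt ℝ K x := by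
  rw [tangentConeAt_eq_biInter_closure]
  refine subset_iInter₂ fun U hU => ?_
  obtain ⟨δ, hδ, hδU⟩ := Metric.mem_nhds_iff.1 hU
  refine (biInter_subset_of_mem hδ).trans (closure_mono ?_)
  rintro _ ⟨y, ⟨hy, hyK, -⟩, rfl⟩
  refine ⟨_, mem_univ _, y - x, ⟨hδU ?_, by simpa using hyK⟩, rfl⟩
  simpa [dist_eq_norm] using hy

theorem span_tangentConeAt_eq_top_of_dirSet {K : Set ℂ} {x : ℂ}
    (hdir : ∃ u ∈ dirSet K x, ∃ w ∈ dirSet K x, LinearIndependent ℝ ![u, w]) :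
    Submodule.span ℝ (tangentConeAt ℝ K x) = ⊤ := by
  obtain ⟨u, hu, w, hw, hind⟩ := hdir
  refine eq_top_iff.2 ?_
  rw [← hind.span_eq_top_of_card_eq_finrank (by simp [Complex.finrank_real_complex])]
  refine Submodule.span_mono ?_
  rintro _ ⟨i, rfl⟩
  fin_cases i
  exacts [dirSet_subset_tangentConeAt K x hu, dirSet_subset_tangentConeAt K x hw]

theorem iteratedFDeriv_add_two_apply {𝕜 E F : Type*} [NontriviallyNormedField 𝕜]
    [NormedAddCommGroup E] [NormedSpace 𝕜 E] [NormedAddCommGroup F] [NormedSpace 𝕜 F]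
    (f : E → F) (x : E) {n : ℕ} (a b : E) (v : Fin n → E) :
    iteratedFDeriv 𝕜 (n + 2) f x (Fin.cons a (Fin.cons b v)) =
      fderiv 𝕜 (fderiv 𝕜 (iteratedFDeriv 𝕜 n f)) x a b v := by
  have h := LinearIsometryEquiv.comp_fderiv (𝕜 := 𝕜)
    (continuousMultilinearCurryLeftEquiv 𝕜 (fun _ : Fin (n + 1) => E) F).symm
    (f := fderiv 𝕜 (iteratedFDeriv 𝕜 n f)) (x := x)
  rw [← iteratedFDeriv_succ_eq_comp_left] at h
  rw [iteratedFDeriv_succ_apply_left, h]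
  rfl

theorem ContDiffAt.iteratedFDeriv_cons_cons_comm {𝕜 E F : Type*} [RCLike 𝕜]
    [NormedAddCommGroup E] [NormedSpace 𝕜 E] [NormedAddCommGroup F] [NormedSpace 𝕜 F]
    {f : E → F} {x : E} {N : WithTop ℕ∞} {n : ℕ} (hf : ContDiffAt 𝕜 N f x) (hn : (n + 2 : ℕ) ≤ N)
    (a b : E) (v : Fin n → E) :
    iteratedFDeriv 𝕜 (n + 2) f x (Fin.cons a (Fin.cons b v)) =
      iteratedFDeriv 𝕜 (n + 2) f x (Fin.cons b (Fin.cons a v)) := by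
  have hsymm : IsSymmSndFDerivAt 𝕜 (iteratedFDeriv 𝕜 n f) x :=
    (hf.iteratedFDeriv_right (m := 2) (by simpa [add_comm] using hn)).isSymmSndFDerivAt (by simp)
  rw [iteratedFDeriv_add_two_apply, iteratedFDeriv_add_two_apply, hsymm.eq]

theorem LinearMap.apply_eq_mul_apply_one (L : ℂ →ₗ[ℝ] ℂ) (hI : L Complex.I = Complex.I * L 1)
    (z : ℂ) : L z = z * L 1 := by
  have hz : z = z.re • (1 : ℂ) + z.im • Complex.I := by simp [Complex.real_smul, Complex.re_add_im]
  rw [hz, map_add, map_smul, map_smul, hI]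
  simp only [Complex.real_smul]
  ring

noncomputable def conformalMultilinearMaps (n : ℕ) :
    Submodule ℝ (ContinuousMultilinearMap ℝ (fun _ : Fin n => ℂ) ℂ) :=
  (Submodule.span ℂ {ContinuousMultilinearMap.mkPiAlgebraFin ℝ n ℂ}).restrictScalars ℝ

theorem mem_conformalMultilinearMaps_iff {n : ℕ}
    {T : ContinuousMultilinearMap ℝ (fun _ : Fin n => ℂ) ℂ} :
    T ∈ conformalMultilinearMaps n ↔ ∃ c : ℂ, ∀ z, T z = c * ∏ i, z i := by
  simp only [conformalMultilinearMaps, Submodule.restrictScalars_mem,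
    Submodule.mem_span_singleton, ContinuousMultilinearMap.ext_iff]
  simp [List.prod_ofFn, eq_comm]

theorem isClosed_conformalMultilinearMaps (n : ℕ) :
    IsClosed (conformalMultilinearMaps n :
      Set (ContinuousMultilinearMap ℝ (fun _ : Fin n => ℂ) ℂ)) :=
  Submodule.closed_of_finiteDimensional (Submodule.span ℂ _)

theorem mem_conformalMultilinearMaps_of_curryLeft {n : ℕ}
    (T : ContinuousMultilinearMap ℝ (fun _ : Fin (n + 2) => ℂ) ℂ)
    (hT : ∀ a b v, T (Fin.cons a (Fin.cons b v)) = T (Fin.cons b (Fin.cons a v)))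
    (hcurry : ∀ a, T.curryLeft a ∈ conformalMultilinearMaps (n + 1)) :
    T ∈ conformalMultilinearMaps (n + 2) := by
  choose c hc using fun a => mem_conformalMultilinearMaps_iff.1 (hcurry a)
  simp only [ContinuousMultilinearMap.curryLeft_apply] at hc
  have hc1 : ∀ a, T (Fin.cons a (Fin.cons 1 1)) = c a := fun a => by simp [hc, Fin.prod_univ_succ]
  let L : ℂ →L[ℝ] ℂ := (ContinuousMultilinearMap.apply ℝ _ ℂ 1).comp T.curryLeft
  have hL : ∀ a, L a = c a := fun a => by simp [L, hc]
  have hI : L Complex.I = Complex.I * L 1 := by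
    rw [hL, hL, ← hc1, hT, hc]
    simp [Fin.prod_univ_succ, mul_comm]
  have hlin : ∀ a, c a = a * c 1 := fun a => by
    simpa only [ContinuousLinearMap.coe_coe, hL] using (L : ℂ →ₗ[ℝ] ℂ).apply_eq_mul_apply_one hI a
  refine mem_conformalMultilinearMaps_iff.2 ⟨c 1, fun z => ?_⟩
  calc T z = c (z 0) * ∏ i, Fin.tail z i := by rw [← hc, Fin.cons_self_tail]
    _ = c 1 * ∏ i, z i := by rw [hlin, Fin.prod_univ_succ z, mul_assoc, mul_left_comm]; rfl

theorem stmt_18_general (K : Set ℂ)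
    (hdir : ∀ x ∈ K, ∃ u ∈ dirSet K x, ∃ w ∈ dirSet K x, LinearIndependent ℝ ![u, w])
    (l : ℕ) (f : ℂ → ℂ) (U : Set ℂ) (hU : IsOpen U) (hKU : K ⊆ U)
    (hf : ContDiffOn ℝ l f U)
    (hconf : ∀ x ∈ K, ∃ c : ℂ, c ≠ 0 ∧ ∀ z : ℂ, fderiv ℝ f x z = c * z) :
    ∀ x ∈ K, ∀ k : ℕ, 1 ≤ k → k ≤ l → ∃ c : ℂ,
      ∀ z : Fin k → ℂ, (iteratedFDeriv ℝ k f x) z = c * ∏ i, z i := by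
  have hfK : ∀ x ∈ K, ContDiffAt ℝ l f x := fun x hx => hf.contDiffAt (hU.mem_nhds (hKU hx))
  suffices h : ∀ n : ℕ, n + 1 ≤ l → ∀ x ∈ K,
      iteratedFDeriv ℝ (n + 1) f x ∈ conformalMultilinearMaps (n + 1) by
    intro x hx k hk hkl
    obtain ⟨n, rfl⟩ := Nat.exists_eq_add_of_le' hk
    exact mem_conformalMultilinearMaps_iff.1 (h n hkl x hx)
  intro n
  induction n with
  | zero =>
    intro _ x hx
    obtain ⟨c, -, hc⟩ := hconf x hx
    exact mem_conformalMultilinearMaps_iff.2 ⟨c, fun z => by simp [hc]⟩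
  | succ n ih =>
    intro hn x hx
    have hDf : DifferentiableAt ℝ (iteratedFDeriv ℝ (n + 1) f) x :=
      (hfK x hx).differentiableAt_iteratedFDeriv (by exact_mod_cast hn)
    refine mem_conformalMultilinearMaps_of_curryLeft _
      ((hfK x hx).iteratedFDeriv_cons_cons_comm (by exact_mod_cast hn)) fun a => ?_
    exact hDf.fderiv_apply_mem_of_mapsTo (isClosed_conformalMultilinearMaps _)
      (fun y hy => ih (by omega) y hy) hx (span_tangentConeAt_eq_top_of_dirSet (hdir x hx)) a

/-- Conformality of higher derivatives on directionally rich sets: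
let `K ⊆ ℂ` be compact such that every `x ∈ K` has two ℝ-linearly independent limit
directions, and let `f` be `C^l` on an open neighborhood `U` of `K` with `Df(x)`
a conformal (i.e. complex-linear with nonzero factor) map for every `x ∈ K`.  Then for
every `x ∈ K` and `1 ≤ k ≤ l`, the `k`-th derivative is conformal: there is `c ∈ ℂ`
with `D^k f(x)(z₁,...,z_k) = c·z₁·z₂⋯z_k`. -/
theorem stmt_18 (K : Set ℂ) (hK : IsCompact K)
    (hdir : ∀ x ∈ K, ∃ u ∈ dirSet K x, ∃ w ∈ dirSet K x, LinearIndependent ℝ ![u, w])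
    (l : ℕ) (f : ℂ → ℂ) (U : Set ℂ) (hU : IsOpen U) (hKU : K ⊆ U)
    (hf : ContDiffOn ℝ l f U)
    (hconf : ∀ x ∈ K, ∃ c : ℂ, c ≠ 0 ∧ ∀ z : ℂ, fderiv ℝ f x z = c * z) :
    ∀ x ∈ K, ∀ k : ℕ, 1 ≤ k → k ≤ l → ∃ c : ℂ,
      ∀ z : Fin k → ℂ, (iteratedFDeriv ℝ k f x) z = c * ∏ i, z i :=
  stmt_18_general K hdir l f U hU hKU hf hconf
end
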